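/- arXiv:math/0703618 — 6 statements merged into one kernel-verified Lean document; each statement's English description precedes it below -/
import Mathlib

section
/- Let R be a Noetherian integral domain of Krull dimension one which contains a field of characteristic zero. If every prime ideal of the polynomial ring R[X] is a set theoretic complete intersection, then R is a Dedekind domain whose ideal class group is a torsion group. -/
/-!
Let `x = s / d` be an element of the fraction field `K` of `R` that is integral over `R`. The
polynomials over `R` vanishing at `x` form a prime `Q` of height one (it extends to `(X - x)` in
`K[X]`), so `Q = √(f)` for a single `f`. As `f` divides a power of the monic equation of `x`, it may
be taken monic; as it divides a power of `dX - s`, its image in `K[X]` is `(X - x)^k`. The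
coefficient of `X^(k-1)` then shows `k x ∈ R`, and `k` is invertible in `R` because `R` contains a
field of characteristic zero, so `x ∈ R`. Hence `R` is a Dedekind domain.

For a nonzero prime `M` of `R`, the prime `M R[X]` has height one, so `M R[X] = √(f)`. Since `f`
divides a power of a nonzero constant of `M`, it is a constant `r`, and then `M = √(r R)`, so a power
of `M` is principal. The class group is generated by the classes of primes, hence it is torsion.
-/

open Polynomial

/-- The height of an ideal: the infimum of the heights (in the prime spectrum)
of the prime ideals containing it. -/
noncomputable def idealHeight {A : Type*} [CommRing A] (I : Ideal A) : ℕ∞ :=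
  ⨅ (P : PrimeSpectrum A) (_ : I ≤ P.asIdeal), Order.height P

/-- An ideal `I` of a commutative ring is a set theoretic complete intersection if there
exist `n` elements, with `n` the height of `I`, such that the radical of `I` equals the
radical of the ideal they generate. -/
def IsSTCI {A : Type*} [CommRing A] (I : Ideal A) : Prop :=
  ∃ n : ℕ, (n : ℕ∞) = idealHeight I ∧
    ∃ a : Fin n → A, I.radical = (Ideal.span (Set.range a)).radical

theorem idealHeight_eq_height {A : Type*} [CommRing A] (I : Ideal A) :
    idealHeight I = I.height := by
  refine le_antisymm ?_ (le_iInf₂ fun P hIP => ?_)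
  · rw [Ideal.height_eq_inf_minimalPrimes]
    refine le_iInf₂ fun J hJ => ?_
    exact (iInf₂_le (⟨J, hJ.isPrime⟩ : PrimeSpectrum A) hJ.1.2).trans
      (PrimeSpectrum.height_eq_orderHeight ⟨J, hJ.isPrime⟩).ge
  · rw [← PrimeSpectrum.height_eq_orderHeight]
    exact Ideal.height_mono hIP

theorem IsSTCI.exists_radical_eq_radical_span_singleton {A : Type*} [CommRing A] {I : Ideal A}
    (hI : IsSTCI I) (h : I.height = 1) : ∃ f : A, I.radical = (Ideal.span {f}).radical := by
  obtain ⟨n, hn, a, ha⟩ := hI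
  obtain rfl : n = 1 := by exact_mod_cast hn.trans ((idealHeight_eq_height I).trans h)
  exact ⟨a 0, by rwa [Set.range_unique] at ha⟩

theorem isUnit_natCast_of_isField_subring {R : Type*} [CommRing R] {K : Subring R}
    (hK : IsField K) [CharZero K] {n : ℕ} (hn : n ≠ 0) : IsUnit (n : R) := by
  let := hK.toField
  simpa using (isUnit_iff_ne_zero.mpr (Nat.cast_ne_zero.mpr hn : (n : K) ≠ 0)).map K.subtype

theorem Ring.DimensionLEOne.of_ringKrullDim_le_one {R : Type*} [CommRing R] [IsDomain R]
    (h : ringKrullDim R ≤ 1) : Ring.DimensionLEOne R :=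
  have : Ring.KrullDimLE 1 R := Ring.krullDimLE_iff.mpr h
  ⟨fun hp0 hp => hp.isMaximal_of_ne_bot hp0⟩

section IntegrallyClosed

theorem exists_algebraMap_eq_of_map_eq_X_sub_C_pow {R K : Type*} [CommRing R] [CommRing K]
    [Nontrivial K] [Algebra R K] {f : R[X]} (hf : f.Monic) {x : K} {k : ℕ}
    (hk : IsUnit (k : R)) (h : f.map (algebraMap R K) = (X - C x) ^ k) :
    ∃ y : R, algebraMap R K y = x := by
  have hnext : algebraMap R K f.nextCoeff = -(algebraMap R K k * x) := by
    rw [← nextCoeff_map_eq_of_isUnit_leadingCoeff _ (hf.leadingCoeff ▸ isUnit_one), h,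
      (monic_X_sub_C x).nextCoeff_pow, nextCoeff_X_sub_C, nsmul_eq_mul, mul_neg, map_natCast]
  refine ⟨-(↑hk.unit⁻¹ * f.nextCoeff), ?_⟩
  rw [map_neg, map_mul, hnext, mul_neg, neg_neg, ← mul_assoc, ← map_mul, hk.val_inv_mul, map_one,
    one_mul]

theorem Polynomial.Monic.eq_X_sub_C_pow_of_dvd {K : Type*} [CommRing K] [IsDomain K] {g : K[X]}
    (hg : g.Monic) {x : K} {t : ℕ} (h : g ∣ (X - C x) ^ t) : ∃ k, g = (X - C x) ^ k := by
  obtain ⟨k, -, hk⟩ := (dvd_prime_pow (prime_X_sub_C x) t).mp h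
  exact ⟨k, eq_of_monic_of_associated hg ((monic_X_sub_C x).pow k) hk⟩

theorem exists_monic_radical_span_singleton_eq {R : Type*} [CommRing R] [IsDomain R]
    {f p : R[X]} (hp : p.Monic) (hpf : p ∈ (Ideal.span {f}).radical) :
    ∃ g : R[X], g.Monic ∧ (Ideal.span {g}).radical = (Ideal.span {f}).radical := by
  obtain ⟨N, hN⟩ := hpf
  have hf : IsUnit f.leadingCoeff :=
    (hp.pow N).isUnit_leadingCoeff_of_dvd (Ideal.mem_span_singleton.mp hN)
  refine ⟨_, monic_of_isUnit_leadingCoeff_inv_smul hf, ?_⟩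
  rw [Units.smul_def, smul_eq_C_mul,
    Ideal.span_singleton_mul_left_unit (isUnit_C.mpr (Units.isUnit _))]

variable (R : Type*) {K : Type*} [CommRing R] [Field K] [Algebra R K]

noncomputable def vanishingIdealAt (x : K) : Ideal R[X] :=
  (Ideal.span {X - C x}).comap (mapRingHom (algebraMap R K))

variable {R}

theorem mem_vanishingIdealAt {x : K} {g : R[X]} :
    g ∈ vanishingIdealAt R x ↔ aeval x g = 0 := by
  simp [vanishingIdealAt, Ideal.mem_span_singleton, dvd_iff_isRoot, aeval_def, eval_map]

instance isPrime_vanishingIdealAt (x : K) : (vanishingIdealAt R x).IsPrime :=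
  have : (Ideal.span {X - C x}).IsPrime :=
    (Ideal.span_singleton_prime (X_sub_C_ne_zero x)).mpr (prime_X_sub_C x)
  Ideal.comap_isPrime _ _

theorem height_vanishingIdealAt [IsFractionRing R K] (x : K) :
    (vanishingIdealAt R x).height = 1 := by
  let := Polynomial.algebra R K
  have := Polynomial.isLocalization (nonZeroDivisors R) K
  have : (Ideal.span {X - C x} : Ideal K[X]).IsMaximal :=
    PrincipalIdealRing.isMaximal_of_irreducible (irreducible_X_sub_C x)
  rw [← IsPrincipalIdealRing.height_eq_one_of_isMaximal (Ideal.span {X - C x})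
      (Polynomial.not_isField K),
    ← IsLocalization.height_under ((nonZeroDivisors R).map C) (Ideal.span {X - C x})]
  rfl

theorem exists_mem_vanishingIdealAt_map_eq_C_mul [IsFractionRing R K] (x : K) :
    ∃ q ∈ vanishingIdealAt R x, ∃ c : K, c ≠ 0 ∧ q.map (algebraMap R K) = C c * (X - C x) := by
  obtain ⟨⟨s, d⟩, hsd⟩ := IsLocalization.surj (nonZeroDivisors R) x
  refine ⟨C (d : R) * X - C s, ?_, algebraMap R K d, (IsLocalization.map_units K d).ne_zero, ?_⟩
  · rw [mem_vanishingIdealAt, map_sub, map_mul, aeval_C, aeval_C, aeval_X, ← hsd, mul_comm,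
      sub_self]
  · simp only [Polynomial.map_sub, Polynomial.map_mul, map_C, map_X, ← hsd]
    rw [mul_sub, ← C_mul, mul_comm x]

theorem isIntegrallyClosed_of_forall_isSTCI {R : Type*} [CommRing R] [IsDomain R]
    (hunit : ∀ n : ℕ, n ≠ 0 → IsUnit (n : R))
    (hSTCI : ∀ P : Ideal R[X], P.IsPrime → IsSTCI P) : IsIntegrallyClosed R := by
  rw [isIntegrallyClosed_iff (FractionRing R)]
  rintro x ⟨p, hp, hpx⟩
  obtain ⟨f, hf⟩ := (hSTCI (vanishingIdealAt R x) inferInstance)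
    |>.exists_radical_eq_radical_span_singleton (height_vanishingIdealAt x)
  obtain ⟨g, hg, hgf⟩ := exists_monic_radical_span_singleton_eq hp
    (hf ▸ Ideal.le_radical (mem_vanishingIdealAt.mpr hpx))
  rw [← hgf, Ideal.IsPrime.radical inferInstance] at hf
  obtain ⟨q, hq, c, hc, hqc⟩ := exists_mem_vanishingIdealAt_map_eq_C_mul (R := R) x
  obtain ⟨t, ht⟩ := hf ▸ hq
  have hgt : g.map (algebraMap R (FractionRing R)) ∣ (X - C x) ^ t := by
    have := Polynomial.map_dvd (algebraMap R (FractionRing R)) (Ideal.mem_span_singleton.mp ht)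
    rwa [Polynomial.map_pow, hqc, mul_pow, ← C_pow,
      (isUnit_C.mpr (pow_ne_zero t hc).isUnit).dvd_mul_left] at this
  obtain ⟨k, hk⟩ := (hg.map _).eq_X_sub_C_pow_of_dvd hgt
  have hk0 : k ≠ 0 := by
    rintro rfl
    have := mem_vanishingIdealAt.mp (hf ▸ Ideal.le_radical (Ideal.mem_span_singleton_self g))
    simp [aeval_def, ← eval_map, hk] at this
  exact exists_algebraMap_eq_of_map_eq_X_sub_C_pow hg (hunit k hk0) hk

end IntegrallyClosed

section ClassGroup

theorem Ideal.height_eq_one_of_ne_bot {R : Type*} [CommRing R] [IsDomain R] [Ring.KrullDimLE 1 R]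
    {p : Ideal R} [p.IsPrime] (hp : p ≠ ⊥) : p.height = 1 := by
  refine le_antisymm ?_ (Order.one_le_iff_pos.mpr (pos_of_ne_zero (by simpa using hp)))
  exact_mod_cast (Ideal.height_le_ringKrullDim_of_ne_top (Ideal.IsPrime.ne_top ‹_›)).trans
    (Ring.krullDimLE_iff.mp ‹_›)

theorem Ideal.comap_C_map_C {R : Type*} [CommRing R] (I : Ideal R) : (I.map C).comap C = I := by
  ext r
  simp only [Ideal.mem_comap, Ideal.mem_map_C_iff, coeff_C]
  exact ⟨fun h => by simpa using h 0, fun h n => by split_ifs <;> simp [h]⟩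

variable {R : Type*} [CommRing R] [IsDedekindDomain R]

theorem Ideal.exists_pow_eq_of_radical_eq {I M : Ideal R} [hM : M.IsPrime] (hM0 : M ≠ ⊥)
    (h : I.radical = M) : ∃ i, 0 < i ∧ I = M ^ i := by
  obtain ⟨t, ht⟩ := I.exists_radical_pow_le_of_fg (IsNoetherian.noetherian _)
  rw [h] at ht
  obtain ⟨i, -, hi⟩ :=
    (dvd_prime_pow (Ideal.prime_of_isPrime hM0 hM) t).mp (Ideal.dvd_iff_le.mpr ht)
  rw [associated_iff_eq] at hi
  refine ⟨i, Nat.pos_of_ne_zero fun hi0 => hM.ne_top ?_, hi⟩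
  rw [← h, hi, hi0, pow_zero, Ideal.one_eq_top, Ideal.radical_top]

theorem Ideal.exists_pow_isPrincipal_of_isSTCI_map_C {M : Ideal R} [hM : M.IsPrime]
    (hM0 : M ≠ ⊥) (hSTCI : IsSTCI (M.map C)) : ∃ i, 0 < i ∧ (M ^ i).IsPrincipal := by
  have := hM.isMaximal hM0
  obtain ⟨f, hf⟩ := hSTCI.exists_radical_eq_radical_span_singleton
    ((height_map_C M).trans (Ideal.height_eq_one_of_ne_bot hM0))
  rw [Ideal.isPrime_map_C_of_isPrime.radical] at hf
  obtain ⟨m, hmM, hm0⟩ := Submodule.exists_mem_ne_zero_of_ne_bot hM0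
  obtain ⟨t, ht⟩ := hf ▸ Ideal.mem_map_of_mem C hmM
  rw [← C_pow] at ht
  obtain ⟨r, rfl⟩ : ∃ r, f = C r := by
    refine ⟨_, eq_C_of_natDegree_eq_zero (Nat.le_zero.mp ?_)⟩
    simpa only [natDegree_C] using natDegree_le_of_dvd (Ideal.mem_span_singleton.mp ht)
      (C_ne_zero.mpr (pow_ne_zero t hm0))
  have hMrad : (Ideal.span {r}).radical = M := by
    rw [← Ideal.comap_C_map_C M, hf, Ideal.comap_radical, ← Set.image_singleton,
      ← Ideal.map_span, Ideal.comap_C_map_C]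
  obtain ⟨i, hi, hMi⟩ := Ideal.exists_pow_eq_of_radical_eq hM0 hMrad
  exact ⟨i, hi, hMi ▸ inferInstance⟩

theorem ClassGroup.isOfFinOrder_of_forall_isPrime
    (h : ∀ P : Ideal R, P.IsPrime → P ≠ ⊥ → ∃ i, 0 < i ∧ (P ^ i).IsPrincipal)
    (c : ClassGroup R) : IsOfFinOrder c := by
  obtain ⟨⟨I, hI⟩, rfl⟩ := ClassGroup.mk0_surjective c
  induction I using UniqueFactorizationMonoid.induction_on_prime with
  | h₁ => exact absurd rfl (mem_nonZeroDivisors_iff_ne_zero.mp hI)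
  | h₂ I hI1 =>
    rw [(ClassGroup.mk0_eq_one_iff hI).mpr (by rw [Ideal.isUnit_iff.mp hI1]; exact ⟨1, by simp⟩)]
    exact IsOfFinOrder.one
  | h₃ I P hI0 hP ih =>
    have hP0 := mem_nonZeroDivisors_iff_ne_zero.mpr hP.ne_zero
    obtain ⟨i, hi, hPi⟩ := h P (Ideal.isPrime_of_prime hP) hP.ne_zero
    have hPfin : IsOfFinOrder (ClassGroup.mk0 ⟨P, hP0⟩) :=
      isOfFinOrder_iff_pow_eq_one.mpr ⟨i, hi, by rwa [← map_pow, ClassGroup.mk0_eq_one_iff]⟩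
    have := hPfin.mul (ih (mem_nonZeroDivisors_iff_ne_zero.mpr hI0))
    rwa [← map_mul] at this

end ClassGroup

/-- A Noetherian domain of Krull dimension one containing a field of characteristic zero,
all of whose primes of `R[X]` are set theoretic complete intersections, is a Dedekind
domain with torsion ideal class group. -/
theorem stmt_0 (R : Type*) [CommRing R] [IsDomain R] [IsNoetherianRing R]
    (hdim : ringKrullDim R = 1)
    (hfield : ∃ K : Subring R, IsField K ∧ CharZero K)
    (hSTCI : ∀ P : Ideal R[X], P.IsPrime → IsSTCI P) :
    IsDedekindDomain R ∧ ∀ c : ClassGroup R, ∃ n : ℕ, 0 < n ∧ c ^ n = 1 := by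
  have := Ring.DimensionLEOne.of_ringKrullDim_le_one hdim.le
  obtain ⟨K, hK, hK0⟩ := hfield
  have := isIntegrallyClosed_of_forall_isSTCI
    (fun _ hn => isUnit_natCast_of_isField_subring hK hn) hSTCI
  have : IsDedekindDomain R := { }
  refine ⟨this, fun c => isOfFinOrder_iff_pow_eq_one.mp ?_⟩
  exact ClassGroup.isOfFinOrder_of_forall_isPrime
    (fun P _ hP0 => Ideal.exists_pow_isPrincipal_of_isSTCI_map_C hP0 (hSTCI _ inferInstance)) c
end

section
/- Let R be any Bézout domain. Then every prime ideal P* of the polynomial ring R[X] whose contraction to R is the zero ideal (i.e., P* ∩ R = 0) is the radical of a principal ideal of R[X]. -/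
open Polynomial

/-!
Let `K` be the fraction field of `R`. Since `P` meets the nonzero constants trivially, it is the
contraction of its extension to the localization `K[X]`, a principal ideal domain. A generator
of that extension can be scaled to the image of a primitive `p : R[X]`, and for primitive `p`
over a GCD domain, Gauss's lemma says `p ∣ q` in `R[X]` iff `p ∣ q` in `K[X]`. Hence `P = (p)`,
and `P` is its own radical.
-/

open nonZeroDivisors

section GCDDomain

variable {R : Type*} [CommRing R] [IsDomain R] [IsGCDMonoid R]

theorem Polynomial.exists_isPrimitive_associated_map {K : Type*} [Field K] [Algebra R K]
    [IsFractionRing R K] {g : K[X]} (hg : g ≠ 0) :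
    ∃ p : R[X], p.IsPrimitive ∧ Associated (p.map (algebraMap R K)) g := by
  let _ : NormalizedGCDMonoid R := Nonempty.some inferInstance
  obtain ⟨b, hb, hbg⟩ := IsLocalization.integerNormalization_spec R⁰ g
  set f := IsLocalization.integerNormalization R⁰ g
  have hf : f ≠ 0 := fun h => hg (IsFractionRing.integerNormalization_eq_zero_iff.1 h)
  have hunit {r : R} (hr : r ≠ 0) : IsUnit (C (algebraMap R K r)) :=
    isUnit_C.2 ((map_ne_zero_iff _ (IsFractionRing.injective R K)).2 hr).isUnit
  have hcontent : C (algebraMap R K f.content) * f.primPart.map (algebraMap R K) =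
      C (algebraMap R K b) * g := by
    rw [← Polynomial.map_C, ← Polynomial.map_mul, ← eq_C_content_mul_primPart, hbg,
      Algebra.smul_def, Polynomial.algebraMap_apply]
  refine ⟨f.primPart, f.isPrimitive_primPart, ?_⟩
  refine (associated_unit_mul_left _ _ (hunit ?_)).symm.trans
    (hcontent ▸ associated_unit_mul_left _ _ (hunit (nonZeroDivisors.ne_zero hb)))
  rwa [Ne, content_eq_zero_iff]

attribute [local instance] Polynomial.algebra in
theorem Ideal.IsPrime.isPrincipal_of_comap_C_eq_bot {P : Ideal R[X]} (hP : P.IsPrime)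
    (h0 : P.comap C = ⊥) : P.IsPrincipal := by
  let K := FractionRing R
  have := Polynomial.isLocalization R⁰ K
  have hdisj : Disjoint (R⁰.map C : Set R[X]) P := by
    refine Set.disjoint_left.2 ?_
    rintro _ ⟨r, hr, rfl⟩ hrP
    exact nonZeroDivisors.ne_zero hr (h0 ▸ hrP : r ∈ (⊥ : Ideal R))
  have hcontract := IsLocalization.under_map_of_isPrime_disjoint _ K[X] hP hdisj
  obtain ⟨g, hg⟩ := Submodule.IsPrincipal.principal (P.map (algebraMap R[X] K[X]))
  rcases eq_or_ne g 0 with rfl | hg0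
  · rw [← hcontract, hg, Submodule.span_zero_singleton, Ideal.under,
      Ideal.comap_bot_of_injective _ (map_injective _ (IsFractionRing.injective R K))]
    exact bot_isPrincipal
  obtain ⟨p, hp, hpg⟩ := exists_isPrimitive_associated_map (R := R) hg0
  refine ⟨p, Submodule.ext fun q => ?_⟩
  rw [← hcontract, Ideal.mem_comap, hg, Ideal.submodule_span_eq, Ideal.submodule_span_eq,
    Ideal.mem_span_singleton, Ideal.mem_span_singleton, ← hpg.dvd_iff_dvd_left,
    hp.dvd_iff_fraction_map_dvd_fraction_map K]
  rfl

end GCDDomain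

/-- Over any Bézout domain `R`, every prime ideal of `R[X]` contracting to the zero ideal
of `R` is the radical of a principal ideal. -/
theorem stmt_7 (R : Type*) [CommRing R] [IsDomain R] [IsBezout R]
    (P : Ideal R[X]) (hP : P.IsPrime)
    (h0 : P.comap (Polynomial.C : R →+* R[X]) = ⊥) :
    ∃ f : R[X], P = (Ideal.span {f}).radical := by
  obtain ⟨f, hf⟩ := hP.isPrincipal_of_comap_C_eq_bot h0
  exact ⟨f, by rw [← Ideal.submodule_span_eq, ← hf, hP.radical]⟩
end

section
/- Let K be a field of characteristic zero. Then every prime ideal of the polynomial ring K[X, Y] in two variables is a set theoretic complete intersection. -/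
open Polynomial

/-!
`K[X, Y]` is a factorial ring of Krull dimension two, so a prime `P` has height `0`, `1` or `2`.
Height zero means `P = 0`. A height-one prime of a factorial domain is generated by any prime
element it contains. A height-two prime is maximal, and a maximal ideal `M` of `K[X₁, …, Xₙ]` is
generated by `n` elements: `K[X₁, …, Xₙ₋₁]` is a Jacobson ring, so `m = M ∩ K[X₁, …, Xₙ₋₁]` is
maximal, and `M` is generated by `m` together with one polynomial, because its image in
`(K[X₁, …, Xₙ₋₁] ⧸ m)[Xₙ]`, a polynomial ring over a field, is principal.
-/

namespace Polynomial

theorem exists_eq_map_comap_C_sup_span_singleton_of_isMaximal {R : Type*} [CommRing R]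
    [IsJacobsonRing R] (M : Ideal R[X]) [M.IsMaximal] :
    ∃ g : R[X], M = (M.comap C).map C ⊔ Ideal.span {g} := by
  set m := M.comap (C : R →+* R[X])
  have : m.IsMaximal := isMaximal_comap_C_of_isJacobsonRing M
  let := Ideal.Quotient.field m
  set ψ := mapRingHom (Ideal.Quotient.mk m)
  have hψ : Function.Surjective ψ := map_surjective _ Ideal.Quotient.mk_surjective
  have hcomap_map (I : Ideal R[X]) : (I.map ψ).comap ψ = I ⊔ m.map C := by
    rw [Ideal.comap_map_of_surjective ψ hψ, ← RingHom.ker_eq_comap_bot, ker_mapRingHom,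
      Ideal.mk_ker]
  obtain ⟨g, hg⟩ := hψ (Submodule.IsPrincipal.generator (M.map ψ))
  refine ⟨g, ?_⟩
  calc M = (M.map ψ).comap ψ := by rw [hcomap_map, sup_eq_left.mpr Ideal.map_comap_le]
    _ = ((Ideal.span {g}).map ψ).comap ψ := by
      rw [Ideal.map_span, Set.image_singleton, hg, Ideal.span_singleton_generator]
    _ = m.map C ⊔ Ideal.span {g} := by rw [hcomap_map, sup_comm]

end Polynomial

namespace MvPolynomial

theorem eq_bot_of_isMaximal_of_isEmpty {K σ : Type*} [Field K] [IsEmpty σ]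
    (M : Ideal (MvPolynomial σ K)) [hM : M.IsMaximal] : M = ⊥ := by
  refine (Submodule.eq_bot_iff M).mpr fun x hx => ?_
  rw [eq_C_of_isEmpty x] at hx ⊢
  by_contra hc
  refine hM.ne_top (Ideal.eq_top_of_isUnit_mem M hx ?_)
  exact (isUnit_iff_ne_zero.mpr fun h => hc (by rw [h, C_0])).map C

theorem exists_eq_span_range_of_isMaximal {K : Type*} [Field K] :
    ∀ {n : ℕ} (M : Ideal (MvPolynomial (Fin n) K)) [M.IsMaximal],
      ∃ a : Fin n → MvPolynomial (Fin n) K, M = Ideal.span (Set.range a)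
  | 0, M, _ => ⟨Fin.elim0, by
      rw [Set.range_eq_empty, Ideal.span_empty, eq_bot_of_isMaximal_of_isEmpty M]⟩
  | n + 1, M, _ => by
    set e := (finSuccEquiv K n).toRingEquiv
    have : (M.map e).IsMaximal := Ideal.map_isMaximal_of_equiv e
    obtain ⟨g, hg⟩ := Polynomial.exists_eq_map_comap_C_sup_span_singleton_of_isMaximal (M.map e)
    have : ((M.map e).comap Polynomial.C).IsMaximal := isMaximal_comap_C_of_isJacobsonRing _
    obtain ⟨a, ha⟩ := exists_eq_span_range_of_isMaximal ((M.map e).comap Polynomial.C)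
    refine ⟨Fin.cons (e.symm g) fun i => e.symm (Polynomial.C (a i)), ?_⟩
    rw [← Ideal.comap_map_of_bijective (I := M) e e.bijective, ← Ideal.map_symm, hg, ha,
      Fin.range_cons, Ideal.span_insert, Ideal.map_sup, Ideal.map_span, Ideal.map_span,
      Ideal.map_span, Set.image_singleton, sup_comm, Set.image_image, ← Set.range_comp]
    rfl

end MvPolynomial

theorem isSTCI_of_eq_span_range {A : Type*} [CommRing A] {I : Ideal A} {n : ℕ}
    (hI : I.height = n) (a : Fin n → A) (h : I = Ideal.span (Set.range a)) : IsSTCI I :=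
  ⟨n, by rw [idealHeight_eq_height, hI], a, by rw [h]⟩

theorem stmt_8_general (K : Type*) [Field K] :
    ∀ P : Ideal (MvPolynomial (Fin 2) K), P.IsPrime → IsSTCI P := by
  intro P hP
  have hdim : ringKrullDim (MvPolynomial (Fin 2) K) = 2 := by simp
  have : FiniteRingKrullDim (MvPolynomial (Fin 2) K) :=
    finiteRingKrullDim_iff_ne_bot_and_top.mpr (by rw [hdim]; decide)
  have hle : P.height ≤ 2 :=
    WithBot.coe_le_coe.mp (P.height_le_ringKrullDim_of_isPrime.trans_eq hdim)
  obtain h0 | h1 | h2 : P.height = 0 ∨ P.height = 1 ∨ P.height = 2 := by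
    lift P.height to ℕ using ne_top_of_le_ne_top (by decide) hle with h
    norm_cast at hle ⊢
    omega
  · refine isSTCI_of_eq_span_range h0 Fin.elim0 ?_
    rw [Set.range_eq_empty, Ideal.span_empty, ← Ideal.height_eq_zero_iff_eq_bot, h0]
  · obtain ⟨x, hxP, hx⟩ := hP.exists_mem_prime_of_ne_bot (Ideal.ne_bot_of_height_eq_one h1)
    refine isSTCI_of_eq_span_range h1 (fun _ => x) ?_
    rw [Set.range_const]
    exact Ideal.eq_span_singleton_of_height_eq_one h1 hxP hx
  · have : P.IsMaximal := Ideal.isMaximal_of_height_eq_ringKrullDim (by rw [h2, hdim]; rfl)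
    obtain ⟨a, ha⟩ := MvPolynomial.exists_eq_span_range_of_isMaximal P
    exact isSTCI_of_eq_span_range h2 a ha

/-- Over a field of characteristic zero, every prime ideal of the polynomial ring in two
variables is a set theoretic complete intersection. -/
theorem stmt_8 (K : Type*) [Field K] [CharZero K] :
    ∀ P : Ideal (MvPolynomial (Fin 2) K), P.IsPrime → IsSTCI P :=
  stmt_8_general K
end

section
/- Let R be an integral domain with field of fractions K, and let a be an element of K that is integral over R. Then the kernel of the evaluation ring homomorphism φ : R[X] → K defined by φ(X) = a is a height one prime ideal of the polynomial ring R[X]. -/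
open Polynomial

/-- Any nonzero prime ideal contained in the kernel of evaluation `R[X] → K` at `a : K`
equals that kernel. -/
lemma key_prime_eq {R K : Type*} [CommRing R] [IsDomain R] [Field K] [Algebra R K]
    [IsFractionRing R K] (a : K) (Q : Ideal R[X]) (hQp : Q.IsPrime)
    (hle : Q ≤ RingHom.ker (Polynomial.aeval a : R[X] →ₐ[R] K)) (hne : Q ≠ ⊥) :
    Q = RingHom.ker (Polynomial.aeval a : R[X] →ₐ[R] K) := by
  set alg := algebraMap R K with halg
  have inj : Function.Injective alg := IsFractionRing.injective R K
  have mapinj : Function.Injective (Polynomial.map alg : R[X] → K[X]) :=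
    Polynomial.map_injective _ inj
  -- membership in ker via eval of map
  have hker : ∀ p : R[X], p ∈ RingHom.ker (Polynomial.aeval a : R[X] →ₐ[R] K) ↔
      (p.map alg).eval a = 0 := by
    intro p
    rw [RingHom.mem_ker]
    show Polynomial.aeval a p = 0 ↔ _
    rw [Polynomial.aeval_def, Polynomial.eval₂_eq_eval_map]
  -- constants are not in Q
  have hC : ∀ c : R, c ≠ 0 → C c ∉ Q := by
    intro c hc hcQ
    have := (hker (C c)).mp (hle hcQ)
    simp only [Polynomial.map_C, Polynomial.eval_C] at this
    exact hc (inj (by simpa using this))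
  -- find a nonzero element of Q
  obtain ⟨q, hqQ, hq0⟩ := Submodule.exists_mem_ne_zero_of_ne_bot hne
  have hq'0 : q.map alg ≠ 0 := fun h => hq0 (mapinj (by simpa using h))
  have hqroot : (q.map alg).IsRoot a := (hker q).mp (hle hqQ)
  -- decompose q' = (X - C a)^k * u
  obtain ⟨u, hqu, hu⟩ := (q.map alg).exists_eq_pow_rootMultiplicity_mul_and_not_dvd hq'0 a
  set k := (q.map alg).rootMultiplicity a with hk
  have hkpos : 0 < k := (Polynomial.rootMultiplicity_pos hq'0).mpr hqroot
  have hua : u.eval a ≠ 0 := fun h => hu (Polynomial.dvd_iff_isRoot.mpr h)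
  -- write a = r / s
  obtain ⟨⟨r, s⟩, hrs⟩ := IsLocalization.surj (nonZeroDivisors R) a
  simp only at hrs
  set M : R[X] := C (s : R) * X - C r with hM
  have hM' : M.map alg = C (alg (s : R)) * (X - C a) := by
    have hra : alg r = alg (s : R) * a := by rw [← hrs]; ring
    rw [hM]
    push_cast [Polynomial.map_sub, Polynomial.map_mul, Polynomial.map_C, Polynomial.map_X]
    rw [hra, Polynomial.C_mul]
    ring
  -- integer normalization of u
  obtain ⟨e, hU⟩ := IsLocalization.integerNormalization_map_to_map (nonZeroDivisors R) u
  set U := IsLocalization.integerNormalization (nonZeroDivisors R) u with hUdef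
  have hsmul : ∀ (c : R) (p : K[X]), c • p = C (alg c) * p := by
    intro c p
    rw [Algebra.smul_def, IsScalarTower.algebraMap_apply R K K[X]]
    rfl
  -- Claim 1 : C (e * s^k) * q = M ^ k * U
  have claim1 : C ((e : R) * (s : R) ^ k) * q = M ^ k * U := by
    apply mapinj
    rw [Polynomial.map_mul, Polynomial.map_mul, Polynomial.map_pow, Polynomial.map_C, hM', hU,
      hsmul, hqu, mul_pow]
    simp only [map_mul, map_pow, Polynomial.C_mul, Polynomial.C_pow]
    ring
  have hMQ : M ∈ Q := by
    have h1 : M ^ k * U ∈ Q := by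
      rw [← claim1]; exact Ideal.mul_mem_left _ _ hqQ
    rcases hQp.mem_or_mem h1 with h | h
    · exact (hQp.pow_mem_iff_mem k hkpos).mp h
    · exfalso
      have := (hker U).mp (hle h)
      rw [hU, hsmul, Polynomial.eval_mul, Polynomial.eval_C] at this
      rcases mul_eq_zero.mp this with h' | h'
      · exact nonZeroDivisors.coe_ne_zero e (inj (by simpa using h'))
      · exact hua h'
  -- now ker ≤ Q
  refine le_antisymm hle ?_
  intro f hf
  have hfroot : (f.map alg).IsRoot a := (hker f).mp hf
  obtain ⟨g, hg⟩ := Polynomial.dvd_iff_isRoot.mpr hfroot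
  obtain ⟨e₂, hG⟩ := IsLocalization.integerNormalization_map_to_map (nonZeroDivisors R) g
  set G := IsLocalization.integerNormalization (nonZeroDivisors R) g with hGdef
  have claim2 : C ((e₂ : R) * (s : R)) * f = M * G := by
    apply mapinj
    rw [Polynomial.map_mul, Polynomial.map_mul, Polynomial.map_C, hM', hG, hsmul, hg, map_mul]
    simp only [map_mul, map_pow, Polynomial.C_mul, Polynomial.C_pow]
    ring
  have h2 : C ((e₂ : R) * (s : R)) * f ∈ Q := by
    rw [claim2]; exact Ideal.mul_mem_right _ _ hMQ
  rcases hQp.mem_or_mem h2 with h | h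
  · exact absurd h (hC _ (mul_ne_zero (nonZeroDivisors.coe_ne_zero e₂)
      (nonZeroDivisors.coe_ne_zero s)))
  · exact h

/-- If `R` is a domain with fraction field `K` and `a ∈ K` is integral over `R`, then the
kernel of the evaluation homomorphism `R[X] → K`, `X ↦ a`, is a height one prime ideal
of `R[X]`. -/
theorem stmt_10 (R K : Type*) [CommRing R] [IsDomain R] [Field K] [Algebra R K]
    [IsFractionRing R K] (a : K) (ha : IsIntegral R a) :
    (RingHom.ker (Polynomial.aeval a : R[X] →ₐ[R] K)).IsPrime ∧
      idealHeight (RingHom.ker (Polynomial.aeval a : R[X] →ₐ[R] K)) = 1 := by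
  set I := RingHom.ker (Polynomial.aeval a : R[X] →ₐ[R] K) with hI
  have hprime : I.IsPrime := RingHom.ker_isPrime _
  refine ⟨hprime, ?_⟩
  -- the kernel is nonzero: the minimal polynomial lies in it
  have hIne : I ≠ ⊥ := by
    intro h
    have h1 : minpoly R a ∈ I := by
      rw [hI, RingHom.mem_ker]; exact minpoly.aeval R a
    rw [h, Ideal.mem_bot] at h1
    exact minpoly.ne_zero ha h1
  set P₀ : PrimeSpectrum R[X] := ⟨I, hprime⟩ with hP₀
  have hP₀bot : P₀ ≠ ⊥ := by
    intro h
    exact hIne congr(($h).asIdeal)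
  have hbotlt : (⊥ : PrimeSpectrum R[X]) < P₀ := hP₀bot.bot_lt
  -- height of P₀ is one
  have hht : Order.height P₀ = 1 := by
    apply le_antisymm
    · rw [show (1 : ℕ∞) = ((1 : ℕ) : ℕ∞) from rfl, Order.height_le_coe_iff]
      intro y hy
      have hyI : y = ⊥ := by
        by_contra hyne
        have hyne' : y.asIdeal ≠ ⊥ := fun h => hyne (PrimeSpectrum.ext h)
        exact hy.ne (PrimeSpectrum.ext (key_prime_eq a y.asIdeal y.isPrime hy.le hyne'))
      have : Order.height y = 0 := by
        rw [Order.height_eq_zero, hyI]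
        exact isMin_bot
      simp [this]
    · rw [ENat.one_le_iff_ne_zero, Ne, Order.height_eq_zero]
      exact fun h => hbotlt.not_ge (h hbotlt.le)
  -- conclude about idealHeight
  apply le_antisymm
  · calc idealHeight I ≤ Order.height P₀ := iInf₂_le P₀ le_rfl
    _ = 1 := hht
  · rw [idealHeight]
    refine le_iInf₂ fun P hP => ?_
    rw [← hht]
    exact Order.height_mono (show P₀ ≤ P from hP)
end

section
/- Let R be a Bézout domain of Krull dimension one in which each nonzero ideal is contained in only finitely many maximal ideals. Then every nonzero prime ideal P of R is the radical of a principal ideal: there exists a in P with P = rad(Ra). -/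
open Polynomial

/-!
Since `R` has dimension one, `P` is maximal. Pick `x ≠ 0` in `P`; only finitely many maximal
ideals contain `x`, so by prime avoidance some `y ∈ P` lies in none of them except `P`.
A generator `a` of the principal ideal `(x, y)` then lies in `P`, and every prime containing `a`
is nonzero, hence maximal, contains both `x` and `y`, and so equals `P`. Thus `P = rad (a)`.
-/

namespace Ideal

variable {R : Type*} [CommRing R]

theorem exists_mem_forall_notMem_of_isMaximal {M : Ideal R} (hM : M.IsMaximal)
    {S : Set (Ideal R)} (hS : S.Finite) (hprime : ∀ J ∈ S, J.IsPrime) (hMS : M ∉ S) :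
    ∃ y ∈ M, ∀ J ∈ S, y ∉ J := by
  have hnot : ¬ ((M : Set R) ⊆ ⋃ J ∈ S, (J : Set R)) := by
    rwa [subset_iUnion_iff_mem_of_isMaximal_of_finite hS M M (fun J hJ _ _ ↦ hprime J hJ)
      hM.ne_top hM.ne_top]
  obtain ⟨y, hyM, hy⟩ := Set.not_subset.mp hnot
  simp only [Set.mem_iUnion, not_exists] at hy
  exact ⟨y, hyM, hy⟩

theorem radical_eq_of_le_of_forall_isPrime {I P : Ideal R} (hP : P.IsPrime) (hIP : I ≤ P)
    (h : ∀ J : Ideal R, J.IsPrime → I ≤ J → P ≤ J) : I.radical = P := by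
  refine le_antisymm ?_ ?_
  · exact (radical_mono hIP).trans_eq hP.radical
  · rw [radical_eq_sInf]
    exact le_sInf fun J ⟨hIJ, hJ⟩ ↦ h J hJ hIJ

end Ideal

/-- In a Bézout domain of Krull dimension one in which each nonzero ideal is contained in
only finitely many maximal ideals, every nonzero prime ideal is the radical of a
principal ideal. -/
theorem stmt_13 (R : Type*) [CommRing R] [IsDomain R] [IsBezout R]
    (hdim : ringKrullDim R = 1)
    (hfin : ∀ I : Ideal R, I ≠ ⊥ → {M : Ideal R | M.IsMaximal ∧ I ≤ M}.Finite)
    (P : Ideal R) (hP : P.IsPrime) (hP0 : P ≠ ⊥) :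
    ∃ a ∈ P, P = (Ideal.span {a}).radical := by
  have : Ring.KrullDimLE 1 R := Ring.krullDimLE_iff.mpr hdim.le
  have hPmax : P.IsMaximal := hP.isMaximal_of_ne_bot hP0
  obtain ⟨x, hxP, hx0⟩ := Submodule.exists_mem_ne_zero_of_ne_bot hP0
  have hx : Ideal.span {x} ≠ ⊥ := by simpa [Ideal.span_singleton_eq_bot] using hx0
  obtain ⟨y, hyP, hy⟩ := Ideal.exists_mem_forall_notMem_of_isMaximal hPmax
    ((hfin _ hx).sdiff (t := {P})) (fun J hJ ↦ hJ.1.1.isPrime) (fun hPS ↦ hPS.2 rfl)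
  set a := Submodule.IsPrincipal.generator (Ideal.span {x, y})
  have hspan_le {J : Ideal R} : Ideal.span {a} ≤ J ↔ x ∈ J ∧ y ∈ J := by
    rw [Ideal.span_singleton_generator, Ideal.span_le, Set.insert_subset_iff,
      Set.singleton_subset_iff, SetLike.mem_coe, SetLike.mem_coe]
  have haP : Ideal.span {a} ≤ P := hspan_le.mpr ⟨hxP, hyP⟩
  refine ⟨a, haP (Ideal.mem_span_singleton_self a),
    (Ideal.radical_eq_of_le_of_forall_isPrime hP haP fun J hJ haJ ↦ ?_).symm⟩
  obtain ⟨hxJ, hyJ⟩ := hspan_le.mp haJ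
  have hJ0 : J ≠ ⊥ := fun h ↦ hx0 (by simpa [h] using hxJ)
  by_contra hPJ
  exact hy J ⟨⟨hJ.isMaximal_of_ne_bot hJ0, (Ideal.span_singleton_le_iff_mem J).mpr hxJ⟩,
    fun hJP ↦ hPJ (le_of_eq hJP.symm)⟩ hyJ
end

section
/- Let R be a Bézout domain of finite Krull dimension. Then the Krull dimension of the polynomial ring R[X] equals the Krull dimension of R plus one, and for every prime ideal P of R of height n, the extended prime ideal PR[X] has height n in R[X]. -/
open Polynomial

/-
Over any ring the fibre of Spec R[X] → Spec R over p is Spec κ(p)[X], of dimension at most one,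
with least element pR[X]; so of two comparable primes of R[X] with the same contraction the smaller
one is extended. Over a Bézout domain every polynomial is d·g with g primitive, and a primitive
polynomial lies in no pR[X]; so every prime contained in an extended prime is itself extended.
Hence contraction is strictly monotone below pR[X], giving ht(pR[X]) = ht(p); and in a chain of
primes of R[X] a step on which the contraction stalls starts at an extended prime, below which no
further stall occurs, giving ht(Q) ≤ ht(Q ∩ R) + 1 and dim R[X] ≤ dim R + 1.
The reverse inequality holds over any ring.
-/

namespace Polynomial

variable {R : Type*} [CommRing R]

lemma comap_C_map_C (I : Ideal R) : (I.map (C : R →+* R[X])).comap C = I := by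
  ext r
  rw [Ideal.mem_comap, Ideal.mem_map_C_iff]
  refine ⟨fun h ↦ by simpa using h 0, fun h n ↦ ?_⟩
  rcases n with _ | n
  · simpa using h
  · simp

lemma krullDim_fiber_le_one (p : PrimeSpectrum R) :
    Order.krullDim (PrimeSpectrum.comap (C : R →+* R[X]) ⁻¹' {p}) ≤ 1 := by
  rw [show C = algebraMap R R[X] from rfl, Order.krullDim_eq_of_orderIso
    (PrimeSpectrum.preimageOrderIsoFiber R R[X] p), ← ringKrullDim,
    ← ringKrullDim_eq_of_ringEquiv (polyEquivTensor R p.asIdeal.ResidueField).toRingEquiv]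
  exact_mod_cast (Ring.krullDimLE_iff (n := 1)).mp inferInstance

end Polynomial

namespace PrimeSpectrum

variable {R : Type*} [CommRing R]

noncomputable def mapC (p : PrimeSpectrum R) : PrimeSpectrum R[X] :=
  ⟨p.asIdeal.map C, inferInstance⟩

lemma comap_monotone {S : Type*} [CommRing S] (f : R →+* S) : Monotone (comap f) :=
  fun _ _ h ↦ Ideal.comap_mono h

@[simp]
lemma comap_C_mapC (p : PrimeSpectrum R) : comap C (mapC p) = p :=
  PrimeSpectrum.ext (Polynomial.comap_C_map_C p.asIdeal)

lemma mapC_comap_C_le (Q : PrimeSpectrum R[X]) : mapC (comap C Q) ≤ Q :=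
  Ideal.map_comap_le

lemma mapC_strictMono : StrictMono (mapC (R := R)) :=
  Monotone.strictMono_of_injective (fun _ _ h ↦ Ideal.map_mono h)
    (Function.LeftInverse.injective comap_C_mapC)

lemma eq_mapC_comap_C_of_lt {Q Q' : PrimeSpectrum R[X]} (hlt : Q < Q')
    (h : comap C Q = comap C Q') : Q = mapC (comap C Q) := by
  let F := comap (C : R →+* R[X]) ⁻¹' {comap C Q}
  let x : F := ⟨Q, rfl⟩
  let y : F := ⟨Q', h.symm⟩
  let z : F := ⟨mapC (comap C Q), comap_C_mapC _⟩
  have hmin : IsMin x := ((Order.krullDim_le_one_iff.mp (Polynomial.krullDim_fiber_le_one _)) x)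
    |>.resolve_right fun hmax ↦ hlt.not_ge (hmax (show x ≤ y from hlt.le))
  exact le_antisymm (hmin (show z ≤ x from mapC_comap_C_le Q)) (mapC_comap_C_le Q)

end PrimeSpectrum

namespace Polynomial

variable {R : Type*} [CommRing R] [IsDomain R] [IsBezout R]

lemma exists_eq_C_mul_isPrimitive (f : R[X]) :
    ∃ (d : R) (g : R[X]), f = C d * g ∧ g.IsPrimitive := by
  rcases eq_or_ne f 0 with rfl | hf
  · exact ⟨0, 1, by simp, isPrimitive_one⟩
  have hprin := IsBezout.isPrincipal_of_FG _ f.contentIdeal_FG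
  obtain ⟨g, hg⟩ := hprin.contentIdeal_generator_dvd
  set d := hprin.generator
  have hd : d ≠ 0 := by rintro hd; simp [hd, hf] at hg
  refine ⟨d, g, hg, fun r hr ↦ ?_⟩
  have hle : f.contentIdeal ≤ Ideal.span {d * r} := by
    rw [hprin.contentIdeal_le_span_iff_dvd, hg, C_mul]
    exact mul_dvd_mul_left _ hr
  rw [← f.contentIdeal.span_singleton_generator, Ideal.span_singleton_le_span_singleton] at hle
  exact isUnit_of_dvd_one ((mul_dvd_mul_iff_left hd).mp (by rwa [mul_one]))

lemma eq_map_C_comap_C_of_le_map_C {Q : Ideal R[X]} [Q.IsPrime] {P : Ideal R} (hP : P ≠ ⊤)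
    (hQP : Q ≤ P.map C) : Q = (Q.comap C).map C := by
  refine le_antisymm (fun f hf ↦ ?_) Ideal.map_comap_le
  obtain ⟨d, g, rfl, hg⟩ := exists_eq_C_mul_isPrimitive f
  have hgQ : g ∉ Q := fun hgQ ↦ hP <| by
    rw [eq_top_iff, ← (isPrimitive_iff_contentIdeal_eq_top g).mp hg, contentIdeal_def,
      Ideal.span_le]
    intro r hr
    obtain ⟨n, -, rfl⟩ := mem_coeffs_iff.mp hr
    exact Ideal.mem_map_C_iff.mp (hQP hgQ) n
  have hd : d ∈ Q.comap C := (Ideal.IsPrime.mem_or_mem ‹_› hf).resolve_right hgQ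
  exact Ideal.mul_mem_right _ _ (Ideal.mem_map_of_mem C hd)

end Polynomial

namespace PrimeSpectrum

variable {R : Type*} [CommRing R] [IsDomain R] [IsBezout R]

lemma eq_mapC_comap_C_of_le_mapC {Q : PrimeSpectrum R[X]} {p : PrimeSpectrum R}
    (h : Q ≤ mapC p) : Q = mapC (comap C Q) :=
  PrimeSpectrum.ext (Polynomial.eq_map_C_comap_C_of_le_map_C p.2.ne_top h)

lemma height_mapC (p : PrimeSpectrum R) : Order.height (mapC p) = Order.height p := by
  refine le_antisymm ?_ (Order.height_le_height_apply_of_strictMono _ mapC_strictMono p)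
  let f : Set.Iic (mapC p) → Set.Iic p := fun Q ↦
    ⟨comap C Q, (comap_monotone C Q.2).trans_eq (comap_C_mapC p)⟩
  have hf : StrictMono f := by
    intro Q Q' hlt
    have hle : comap C (Q : PrimeSpectrum R[X]) ≤ comap C Q' := comap_monotone C hlt.le
    refine hle.lt_of_ne fun heq ↦ hlt.ne (Subtype.ext ?_)
    rw [eq_mapC_comap_C_of_le_mapC Q.2, eq_mapC_comap_C_of_le_mapC Q'.2, heq]
  have := Order.krullDim_le_of_strictMono f hf
  rwa [← Order.height_eq_krullDim_Iic, ← Order.height_eq_krullDim_Iic, WithBot.coe_le_coe] at this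

lemma length_le_height_comap_C_last_add_one (q : LTSeries (PrimeSpectrum R[X])) :
    q.length ≤ Order.height (comap C q.last) + 1 := by
  induction q using RelSeries.inductionOn' with
  | singleton => simp
  | snoc q Q hlt ih =>
    rw [RelSeries.snoc_length, RelSeries.last_snoc, Nat.cast_add, Nat.cast_one]
    gcongr
    rcases (comap_monotone C hlt.le).lt_or_eq with hlt' | heq
    · exact ih.trans (Order.height_add_one_le hlt')
    · calc (q.length : ℕ∞) ≤ Order.height q.last := Order.length_le_height_last
        _ = Order.height (comap C Q) := by
          rw [eq_mapC_comap_C_of_lt hlt heq, height_mapC, heq]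

lemma height_le_height_comap_C_add_one (Q : PrimeSpectrum R[X]) :
    Order.height Q ≤ Order.height (comap C Q) + 1 :=
  Order.height_le fun q hq ↦ hq ▸ length_le_height_comap_C_last_add_one q

end PrimeSpectrum

open PrimeSpectrum in
theorem Polynomial.ringKrullDim_le_add_one_of_isBezout {R : Type*} [CommRing R] [IsDomain R]
    [IsBezout R] : ringKrullDim R[X] ≤ ringKrullDim R + 1 := by
  rw [ringKrullDim, ringKrullDim, Order.krullDim_eq_iSup_height, iSup_le_iff]
  intro Q
  calc (Order.height Q : WithBot ℕ∞) ≤ ↑(Order.height (comap C Q) + 1) :=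
        WithBot.coe_le_coe.mpr (height_le_height_comap_C_add_one Q)
    _ ≤ Order.krullDim (PrimeSpectrum R) + 1 := by
      push_cast
      gcongr
      exact Order.height_le_krullDim _

lemma idealHeight_asIdeal {A : Type*} [CommRing A] (p : PrimeSpectrum A) :
    idealHeight p.asIdeal = Order.height p :=
  le_antisymm (iInf₂_le p le_rfl) (le_iInf₂ fun _ hq ↦ Order.height_mono hq)

theorem stmt_16_general (R : Type*) [CommRing R] [IsDomain R] [IsBezout R] :
    ringKrullDim R[X] = ringKrullDim R + 1 ∧
      ∀ P : Ideal R, P.IsPrime →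
        idealHeight (P.map (Polynomial.C : R →+* R[X])) = idealHeight P := by
  refine ⟨le_antisymm ringKrullDim_le_add_one_of_isBezout
    ringKrullDim_succ_le_ringKrullDim_polynomial, fun P hP ↦ ?_⟩
  let p : PrimeSpectrum R := ⟨P, hP⟩
  calc idealHeight (P.map C) = Order.height (PrimeSpectrum.mapC p) :=
        idealHeight_asIdeal (PrimeSpectrum.mapC p)
    _ = Order.height p := PrimeSpectrum.height_mapC p
    _ = idealHeight P := (idealHeight_asIdeal p).symm

/-- For a finite dimensional Bézout domain `R`, `dim R[X] = dim R + 1`, and for every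
prime ideal `P` of `R`, the extension `P R[X]` has the same height as `P`. -/
theorem stmt_16 (R : Type*) [CommRing R] [IsDomain R] [IsBezout R]
    (hfin : ringKrullDim R ≠ ⊤) :
    ringKrullDim R[X] = ringKrullDim R + 1 ∧
      ∀ P : Ideal R, P.IsPrime →
        idealHeight (P.map (Polynomial.C : R →+* R[X])) = idealHeight P :=
  stmt_16_general R
end
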